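/- arXiv:1504.05932 — 2 statements merged into one kernel-verified Lean document; each statement's English description precedes it below -/
import Mathlib

section
/- For n = 2 strategic agents with complete and perfect information, for every CSAM f_O over p categories there exists a preference profile such that in the subgame-perfect Nash equilibrium, for each agent j ∈ {1,2} the rank of the bundle allocated to agent j is exactly 2^p + 1 − ∏_{i=1}^{p} k_{j,i}. -/
open scoped Classical

/-- A bundle in a basic categorized domain: one item (from `Fin n`) per category (`Fin p`). -/
abbrev Bundle (n p : ℕ) := Fin p → Fin n

/-- A preference: a binary relation on bundles (`R a b` means `a` is strictly preferred to `b`). -/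
abbrev Pref (n p : ℕ) := Bundle n p → Bundle n p → Prop

/-- A profile assigns a preference to each of the `n` agents. -/
abbrev Profile (n p : ℕ) := Fin n → Pref n p

/-- A categorial sequential allocation mechanism: a linear order over agent–category
pairs, i.e. a bijection from rounds `Fin (n*p)` to pairs. -/
abbrev Csam (n p : ℕ) := Fin (n * p) ≃ Fin n × Fin p

/-- All preferences in the profile are strict linear orders. -/
def ValidProfile {n p : ℕ} (P : Profile n p) : Prop :=
  ∀ j, IsStrictTotalOrder (Bundle n p) (P j)

/-- A valid allocation: in every category, no item is given to two agents. -/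
def ValidAlloc {n p : ℕ} (A : Fin n → Bundle n p) : Prop :=
  ∀ i : Fin p, Function.Injective fun j => A j i

/-- The rank of bundle `b` in preference `R` (1 = best, `n^p` = worst). -/
noncomputable def rank {n p : ℕ} (R : Pref n p) (b : Bundle n p) : ℕ :=
  1 + (Finset.univ.filter fun c => R c b).card

/-- `kval O j i`: the number of category-`i` items still available when agent `j`
picks from category `i` (depends only on `O`). -/
def kval {n p : ℕ} (O : Csam n p) (j : Fin n) (i : Fin p) : ℕ :=
  1 + (Finset.univ.filter fun j' : Fin n => O.symm (j, i) < O.symm (j', i)).card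

/-- `Oj O j l`: the `l`-th category (0-based) that agent `j` visits in `O`. -/
noncomputable def Oj {n p : ℕ} (O : Csam n p) (j : Fin n) (l : Fin p) : Fin p :=
  (O ((Finset.univ.image fun i : Fin p => O.symm (j, i)).orderIsoOfFin
      (by
        rw [Finset.card_image_of_injective _
          (fun a b h => congrArg Prod.snd (O.symm.injective h))]
        simp) l).1).2

/-- `NoInterruptF O j K`: for every later position `l > K` of agent `j`, no other agent
picks from category `Oj O j l` between agent `j`'s pick in category `Oj O j K`
and her pick in category `Oj O j l`. -/
def NoInterruptF {n p : ℕ} (O : Csam n p) (j : Fin n) (K : ℕ) : Prop :=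
  ∀ lK : Fin p, (lK : ℕ) = K → ∀ l : Fin p, lK < l → ∀ j' : Fin n, j' ≠ j →
    ¬ (O.symm (j, Oj O j lK) < O.symm (j', Oj O j l) ∧
       O.symm (j', Oj O j l) < O.symm (j, Oj O j l))

/-- `Kval O j`: the smallest (0-based) index `K` such that agent `j` is not interrupted
from position `K` onwards. -/
noncomputable def Kval {n p : ℕ} (O : Csam n p) (j : Fin n) : ℕ :=
  sInf {K : ℕ | K < p ∧ NoInterruptF O j K}

/-- Item `d` of category `i` is still available at round `t` under final allocation `A`. -/
def availAt {n p : ℕ} (O : Csam n p) (A : Fin n → Bundle n p) (t : Fin (n * p))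
    (i : Fin p) (d : Fin n) : Prop :=
  ∀ j' : Fin n, O.symm (j', i) < t → A j' i ≠ d

/-- Bundle `b` is still achievable by agent `j` at round `t`: it agrees with her previous
choices and all remaining components are still available. -/
def achievable {n p : ℕ} (O : Csam n p) (A : Fin n → Bundle n p) (j : Fin n)
    (t : Fin (n * p)) (b : Bundle n p) : Prop :=
  (∀ c : Fin p, O.symm (j, c) < t → b c = A j c) ∧
  (∀ c : Fin p, ¬ O.symm (j, c) < t → availAt O A t c (b c))

/-- Agent `j` plays optimistically in the run producing allocation `A`: at each of her
rounds she picks the item of her top-ranked still-achievable bundle. -/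
def OptPlays {n p : ℕ} (O : Csam n p) (P : Profile n p) (A : Fin n → Bundle n p)
    (j : Fin n) : Prop :=
  ∀ i : Fin p, ∃ b : Bundle n p, achievable O A j (O.symm (j, i)) b ∧
    (∀ b' : Bundle n p, achievable O A j (O.symm (j, i)) b' → b' ≠ b → P j b b') ∧
    A j i = b i

/-- Agent `j` plays pessimistically in the run producing `A`: at each of her rounds, for
every available alternative item `d'`, some achievable bundle with component `d'` is worse
than every achievable bundle with the component she actually chose. -/
def PesPlays {n p : ℕ} (O : Csam n p) (P : Profile n p) (A : Fin n → Bundle n p)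
    (j : Fin n) : Prop :=
  ∀ i : Fin p, ∀ d' : Fin n, availAt O A (O.symm (j, i)) i d' → d' ≠ A j i →
    ∃ w' : Bundle n p, achievable O A j (O.symm (j, i)) w' ∧ w' i = d' ∧
      ∀ w : Bundle n p, achievable O A j (O.symm (j, i)) w → w i = A j i → P j w w'

/-- `∏_{l = K_j}^{p} k_{j, O_j(l)}`. -/
noncomputable def optProd {n p : ℕ} (O : Csam n p) (j : Fin n) : ℕ :=
  ∏ l ∈ Finset.univ.filter (fun l : Fin p => Kval O j ≤ (l : ℕ)), kval O j (Oj O j l)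

/-- `∑_{l = 1}^{p} (k_{j, O_j(l)} - 1)`. -/
noncomputable def pesSum {n p : ℕ} (O : Csam n p) (j : Fin n) : ℕ :=
  ∑ l : Fin p, (kval O j (Oj O j l) - 1)

/-- In history `h`, item `d` of category `i` is available at round `t`: no earlier round
assigned to category `i` chose `d`. -/
def availH {n p : ℕ} (O : Csam n p) (h : Fin (n * p) → Fin n) (t : ℕ) (i : Fin p)
    (d : Fin n) : Prop :=
  ∀ t' : Fin (n * p), (t' : ℕ) < t → (O t').2 = i → h t' ≠ d

/-- `F` is a backward-induction (SPNE) outcome function for the extensive-form game of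
the CSAM `O` under profile `P`: `F t h` is the final allocation of the subgame starting at
round `t` with history `h` (choices at rounds `< t`); at a leaf it reads off the history,
and at each node the active agent picks an available item whose continuation she weakly
prefers to that of every other available item. -/
def BIOutcome {n p : ℕ} (O : Csam n p) (P : Profile n p)
    (F : ℕ → (Fin (n * p) → Fin n) → Fin n → Bundle n p) : Prop :=
  (∀ h : Fin (n * p) → Fin n, ∀ j : Fin n, ∀ i : Fin p, F (n * p) h j i = h (O.symm (j, i))) ∧
  (∀ t : ℕ, ∀ ht : t < n * p, ∀ h : Fin (n * p) → Fin n,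
    ∃ d : Fin n, availH O h t (O ⟨t, ht⟩).2 d ∧
      F t h = F (t + 1) (Function.update h ⟨t, ht⟩ d) ∧
      ∀ d' : Fin n, availH O h t (O ⟨t, ht⟩).2 d' → d' ≠ d →
        ((F (t + 1) (Function.update h ⟨t, ht⟩ d)) (O ⟨t, ht⟩).1 =
            (F (t + 1) (Function.update h ⟨t, ht⟩ d')) (O ⟨t, ht⟩).1) ∨
          P (O ⟨t, ht⟩).1
            ((F (t + 1) (Function.update h ⟨t, ht⟩ d)) (O ⟨t, ht⟩).1)
            ((F (t + 1) (Function.update h ⟨t, ht⟩ d')) (O ⟨t, ht⟩).1))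

/-!
Agent `j` ranks bundles as binary numbers whose digits are the items she receives, the
categories in which she picks first giving the least significant digits. Whatever happens in the
other categories she then strictly prefers item `0` in each category, and with two agents a
choice in one category does not affect the play in the others, so backward induction makes every
agent take item `0` whenever it is still free. Agent `j` thus gets item `0` exactly in the `m`
categories where she picks first, where `∏ i, k_{j,i} = 2 ^ m`, and the bundles she prefers to
hers are those with a `0` in some other category: `2 ^ p - 2 ^ m` of them.
-/

section BinaryKey

variable {p : ℕ}

noncomputable def binKey (σ : Fin p ≃ Fin p) : (Fin p → Fin 2) ≃ Fin (2 ^ p) :=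
  (σ.arrowCongr (Equiv.refl _)).trans finFunctionFinEquiv

lemma binKey_val (σ : Fin p ≃ Fin p) (b : Fin p → Fin 2) :
    (binKey σ b : ℕ) = ∑ i, (b i : ℕ) * 2 ^ (σ i : ℕ) := by
  rw [binKey, Equiv.trans_apply, finFunctionFinEquiv_apply]
  exact (Equiv.sum_comp σ fun t => ((b (σ.symm t) : ℕ) * 2 ^ (t : ℕ))).symm.trans (by simp)

lemma binKey_strictMono (σ : Fin p ≃ Fin p) : StrictMono (binKey σ) := by
  intro b c hbc
  obtain ⟨hle, i, hi⟩ := Pi.lt_def.mp hbc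
  rw [Fin.lt_def, binKey_val, binKey_val]
  refine Finset.sum_lt_sum (fun k _ => Nat.mul_le_mul_right _ (hle k)) ⟨i, Finset.mem_univ _, ?_⟩
  exact Nat.mul_lt_mul_of_pos_right hi (by positivity)

/-- A relabelling of the coordinates that moves `s` onto the initial segment `[0, #s)`. -/
noncomputable def finsetFirst (s : Finset (Fin p)) : Fin p ≃ Fin p :=
  (finSumEquivOfFinset rfl rfl).symm.trans
    (finSumFinEquiv.trans (finCongr (by rw [s.card_add_card_compl, Fintype.card_fin])))

lemma finsetFirst_orderEmbOfFin_compl (s : Finset (Fin p)) (k : Fin sᶜ.card) :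
    (finsetFirst s (sᶜ.orderEmbOfFin rfl k) : ℕ) = s.card + k := by
  rw [← finSumEquivOfFinset_inr rfl rfl, finsetFirst, Equiv.trans_apply, Equiv.symm_apply_apply]
  simp

lemma binKey_finsetFirst_indicator (s : Finset (Fin p)) :
    (binKey (finsetFirst s) (fun i => if i ∈ s then 0 else 1) : ℕ) = 2 ^ p - 2 ^ s.card := by
  have hout (k : Fin sᶜ.card) : sᶜ.orderEmbOfFin rfl k ∉ s :=
    Finset.mem_compl.mp (sᶜ.orderEmbOfFin_mem rfl k)
  calc (binKey (finsetFirst s) (fun i => if i ∈ s then 0 else 1) : ℕ)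
      = ∑ k : Fin sᶜ.card, 2 ^ s.card * 2 ^ (k : ℕ) := by
        rw [binKey_val, ← Equiv.sum_comp (finSumEquivOfFinset (s := s) rfl rfl),
          Fintype.sum_sum_type]
        simp [finsetFirst_orderEmbOfFin_compl, Finset.orderEmbOfFin_mem, hout, pow_add]
    _ = 2 ^ s.card * (2 ^ sᶜ.card - 1) := by
        rw [← Finset.mul_sum, Fin.sum_univ_eq_sum_range (2 ^ ·), Nat.geomSum_eq le_rfl]; simp
    _ = 2 ^ p - 2 ^ s.card := by
        rw [Nat.mul_sub, ← pow_add, s.card_add_card_compl, Fintype.card_fin, mul_one]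

end BinaryKey

lemma rank_of_key {n p m : ℕ} (e : Bundle n p ≃ Fin m) (b : Bundle n p) :
    rank (fun c c' => e c < e c') b = 1 + e b := by
  rw [rank, Finset.card_equiv e (t := Finset.Iio (e b)) (by simp), Fin.card_Iio]

lemma isStrictTotalOrder_of_key {α : Type*} {m : ℕ} (e : α ≃ Fin m) :
    IsStrictTotalOrder α (fun c c' => e c < e c') where
  trichotomous _ _ h₁ h₂ := e.injective (le_antisymm (not_lt.1 h₂) (not_lt.1 h₁))
  irrefl _ := lt_irrefl _
  trans _ _ _ := lt_trans

section GreedyPlay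

variable {m : ℕ}

/-- The item obtained at round `a` by an agent whose opponent picks from the same category at
round `b`, when the rounds before `t` are fixed by the history `h` and from round `t` on each
agent takes item `0` whenever it is still available. -/
def greedyPick (t : ℕ) (h : Fin m → Fin 2) (a b : Fin m) : Fin 2 :=
  if (a : ℕ) < t then h a
  else if (b : ℕ) < t then h b + 1
  else if a < b then 0 else 1

lemma greedyPick_update_of_ne {t : ℕ} {h : Fin m → Fin 2} {a b r : Fin m} (d : Fin 2)
    (hra : r ≠ a) (hrb : r ≠ b) :
    greedyPick t (Function.update h r d) a b = greedyPick t h a b := by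
  simp [greedyPick, Function.update_of_ne hra.symm, Function.update_of_ne hrb.symm]

lemma greedyPick_update_succ {h : Fin m → Fin 2} {a b r : Fin m} {d : Fin 2}
    (hda : r = a → d = greedyPick r h a b) (hdb : r = b → d = greedyPick r h b a) :
    greedyPick (r + 1) (Function.update h r d) a b = greedyPick r h a b := by
  by_cases hra : r = a
  · subst hra
    obtain rfl := hda rfl
    simp [greedyPick]
  by_cases hrb : r = b
  · subst hrb
    obtain rfl := hdb rfl
    by_cases har : (a : ℕ) < r
    · simp [greedyPick, Function.update_of_ne (Ne.symm hra), har, Nat.lt_succ_of_lt har]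
    · have hra' : r < a := lt_of_le_of_ne (not_lt.1 har) hra
      simp [greedyPick, har, hra', hra'.not_gt]
  · have ha : (a : ℕ) < r + 1 ↔ (a : ℕ) < r := by
      have := Fin.val_ne_of_ne hra; omega
    have hb : (b : ℕ) < r + 1 ↔ (b : ℕ) < r := by
      have := Fin.val_ne_of_ne hrb; omega
    simp only [greedyPick, ha, hb, Function.update_of_ne (Ne.symm hra),
      Function.update_of_ne (Ne.symm hrb)]

end GreedyPlay

section TwoAgents

variable {p : ℕ} (O : Csam 2 p)

lemma fin_two_eq_or_eq_add_one : ∀ a b : Fin 2, a = b ∨ a = b + 1 := by decide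

lemma fin_two_eq_add_one_of_ne {a b : Fin 2} (hab : a ≠ b) : a = b + 1 :=
  (fin_two_eq_or_eq_add_one a b).resolve_left hab

lemma fin_two_add_one_add_one : ∀ a : Fin 2, a + 1 + 1 = a := by decide

lemma fin_two_add_one_ne : ∀ a : Fin 2, a + 1 ≠ a := by decide

def firstCats (j : Fin 2) : Finset (Fin p) :=
  Finset.univ.filter fun i => O.symm (j, i) < O.symm (j + 1, i)

lemma kval_two (j : Fin 2) (i : Fin p) : kval O j i = if i ∈ firstCats O j then 2 else 1 := by
  rw [kval, Finset.card_filter, Fin.sum_univ_two]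
  obtain rfl | rfl := fin_two_eq_or_eq_add_one j 0 <;>
    simp only [Fin.isValue, Fin.reduceAdd, zero_add, add_zero, lt_self_iff_false, ↓reduceIte,
      firstCats, Finset.mem_filter, Finset.mem_univ, true_and] <;>
    split_ifs <;> omega

lemma prod_kval_two (j : Fin 2) : ∏ i, kval O j i = 2 ^ (firstCats O j).card := by
  simp_rw [kval_two, Finset.prod_ite_mem, Finset.univ_inter, Finset.prod_const]

def greedyAlloc (t : ℕ) (h : Fin (2 * p) → Fin 2) : Fin 2 → Bundle 2 p :=
  fun j i => greedyPick t h (O.symm (j, i)) (O.symm (j + 1, i))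

lemma symm_ne_symm_add_one (j : Fin 2) (i : Fin p) : O.symm (j, i) ≠ O.symm (j + 1, i) :=
  fun e => fin_two_add_one_ne j (congrArg Prod.fst (O.symm.injective e)).symm

lemma eq_symm_or_eq_symm_of_snd_eq {r : Fin (2 * p)} {i : Fin p} (hr : (O r).2 = i) (j : Fin 2) :
    r = O.symm (j, i) ∨ r = O.symm (j + 1, i) := by
  obtain hj | hj := fin_two_eq_or_eq_add_one (O r).1 j <;>
    [left; right] <;> rw [← hj, ← hr, Prod.mk.eta, Equiv.symm_apply_apply]

lemma greedyAlloc_last (h : Fin (2 * p) → Fin 2) (j : Fin 2) (i : Fin p) :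
    greedyAlloc O (2 * p) h j i = h (O.symm (j, i)) := by
  simp [greedyAlloc, greedyPick]

lemma greedyAlloc_zero (h : Fin (2 * p) → Fin 2) (j : Fin 2) :
    greedyAlloc O 0 h j = fun i => if i ∈ firstCats O j then 0 else 1 := by
  ext i
  simp [greedyAlloc, greedyPick, firstCats]

lemma greedyAlloc_update_self {h : Fin (2 * p) → Fin 2} {r : Fin (2 * p)} (d : Fin 2)
    {j : Fin 2} {i : Fin p} (hr : O.symm (j, i) = r) :
    greedyAlloc O (r + 1) (Function.update h r d) j i = d := by
  simp [greedyAlloc, greedyPick, hr]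

lemma greedyAlloc_update_of_ne {t : ℕ} {h : Fin (2 * p) → Fin 2} {r : Fin (2 * p)} (d : Fin 2)
    {j : Fin 2} {i : Fin p} (hr : O.symm (j, i) = r) (j' : Fin 2) {i' : Fin p} (hi : i' ≠ i) :
    greedyAlloc O t (Function.update h r d) j' i' = greedyAlloc O t h j' i' := by
  refine greedyPick_update_of_ne d ?_ ?_ <;> intro e <;> rw [← hr] at e <;>
    exact hi (congrArg Prod.snd (O.symm.injective e)).symm

lemma greedyAlloc_update_greedy (h : Fin (2 * p) → Fin 2) (r : Fin (2 * p)) :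
    greedyAlloc O (r + 1) (Function.update h r (greedyAlloc O r h (O r).1 (O r).2)) =
      greedyAlloc O r h := by
  ext j i : 2
  refine greedyPick_update_succ ?_ ?_ <;> rintro rfl
  · simp [greedyAlloc]
  · simp [greedyAlloc, fin_two_add_one_add_one]

variable {P : Profile 2 p}
  {F : ℕ → (Fin (2 * p) → Fin 2) → Fin 2 → Bundle 2 p}

lemma choice_eq_greedyAlloc (hP : ∀ j (b c : Bundle 2 p), b < c → ¬ P j c b) (r : Fin (2 * p))
    (hnext : ∀ h, F (r + 1) h = greedyAlloc O (r + 1) h) (h : Fin (2 * p) → Fin 2) (d : Fin 2)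
    (hd : availH O h r (O r).2 d)
    (hopt : ∀ d', availH O h r (O r).2 d' → d' ≠ d →
      F (r + 1) (Function.update h r d) (O r).1 = F (r + 1) (Function.update h r d') (O r).1 ∨
        P (O r).1 (F (r + 1) (Function.update h r d) (O r).1)
          (F (r + 1) (Function.update h r d') (O r).1)) :
    d = greedyAlloc O r h (O r).1 (O r).2 := by
  rcases hji : O r with ⟨j, i⟩
  have hr : O.symm (j, i) = r := by rw [← hji, Equiv.symm_apply_apply]
  simp only [hnext, hji] at hd hopt
  by_cases hb : (O.symm (j + 1, i) : ℕ) < r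
  · have hne : h (O.symm (j + 1, i)) ≠ d := hd _ hb (by simp)
    simpa [greedyAlloc, greedyPick, hr, hb] using fin_two_eq_add_one_of_ne hne.symm
  have hrb : r < O.symm (j + 1, i) :=
    lt_of_le_of_ne (not_lt.1 hb) (hr ▸ symm_ne_symm_add_one O j i)
  have hg : greedyAlloc O r h j i = 0 := by simp [greedyAlloc, greedyPick, hr, hb, hrb]
  rw [hg]
  by_contra hd0
  -- item `0` is still free, and taking it only improves `j`'s bundle in category `i`
  have h0 : availH O h r i 0 := by
    intro t' ht' hi'
    rcases eq_symm_or_eq_symm_of_snd_eq O hi' j with rfl | rfl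
    · exact absurd ht' (by rw [hr]; exact lt_irrefl _)
    · exact absurd ht' hb
  have hlt : greedyAlloc O (r + 1) (Function.update h r 0) j <
      greedyAlloc O (r + 1) (Function.update h r d) j := by
    refine Pi.lt_def.2 ⟨fun i' => ?_, i, ?_⟩
    · by_cases hi' : i' = i
      · subst hi'
        rw [greedyAlloc_update_self O _ hr, greedyAlloc_update_self O _ hr]
        exact Fin.zero_le d
      · rw [greedyAlloc_update_of_ne O _ hr _ hi', greedyAlloc_update_of_ne O _ hr _ hi']
    · rw [greedyAlloc_update_self O _ hr, greedyAlloc_update_self O _ hr]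
      exact Fin.pos_iff_ne_zero.2 hd0
  rcases hopt 0 h0 (Ne.symm hd0) with he | hpref
  · exact hlt.ne he.symm
  · exact hP j _ _ hlt hpref

lemma BIOutcome.eq_greedyAlloc (hF : BIOutcome O P F)
    (hP : ∀ j (b c : Bundle 2 p), b < c → ¬ P j c b) {t : ℕ} (ht : t ≤ 2 * p)
    (h : Fin (2 * p) → Fin 2) : F t h = greedyAlloc O t h := by
  induction ht using Nat.decreasingInduction generalizing h with
  | self => funext j i; rw [hF.1, greedyAlloc_last]
  | of_succ t ht ih =>
    obtain ⟨d, hd, heq, hopt⟩ := hF.2 t ht h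
    rw [heq, ih, choice_eq_greedyAlloc O hP ⟨t, ht⟩ ih h d hd hopt]
    exact greedyAlloc_update_greedy O h ⟨t, ht⟩

end TwoAgents

noncomputable def lexProfile {p : ℕ} (O : Csam 2 p) : Profile 2 p :=
  fun j b c => binKey (finsetFirst (firstCats O j)) b < binKey (finsetFirst (firstCats O j)) c

theorem statement18_general (p : ℕ) (O : Csam 2 p) :
    ∃ P : Profile 2 p, ValidProfile P ∧
      ∀ F : ℕ → (Fin (2 * p) → Fin 2) → Fin 2 → Bundle 2 p,
        BIOutcome O P F →
        ∀ h0 : Fin (2 * p) → Fin 2, ∀ j : Fin 2,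
          rank (P j) (F 0 h0 j) = 2 ^ p + 1 - ∏ i : Fin p, kval O j i := by
  refine ⟨lexProfile O, fun j => isStrictTotalOrder_of_key _, fun F hF h0 j => ?_⟩
  have hmono : ∀ j (b c : Bundle 2 p), b < c → ¬ lexProfile O j c b :=
    fun j _ _ hbc => (binKey_strictMono _ hbc).not_gt
  rw [BIOutcome.eq_greedyAlloc O hF hmono (Nat.zero_le _) h0, greedyAlloc_zero]
  unfold lexProfile
  rw [rank_of_key, binKey_finsetFirst_indicator, prod_kval_two]
  have : 2 ^ (firstCats O j).card ≤ 2 ^ p :=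
    Nat.pow_le_pow_right two_pos ((Finset.card_le_univ _).trans_eq (Fintype.card_fin p))
  omega

theorem statement18 (p : ℕ) (hp : 0 < p) (O : Csam 2 p) :
    ∃ P : Profile 2 p, ValidProfile P ∧
      ∀ F : ℕ → (Fin (2 * p) → Fin 2) → Fin 2 → Bundle 2 p,
        BIOutcome O P F →
        ∀ h0 : Fin (2 * p) → Fin 2, ∀ j : Fin 2,
          rank (P j) (F 0 h0 j) = 2 ^ p + 1 - ∏ i : Fin p, kval O j i :=
  statement18_general p O
end

section
/- In the extensive-form game induced by a CSAM, define A_{j,t} recursively by A_{j,np} = 1 and, if O(t) = (j,i), A_{j,t−1} = k_{j,i} · A_{j,t} while A_{j',t−1} = A_{j',t} for j' ≠ j. Then for every node N of the backward-induction tree at round t and every agent j, at least A_{j,t} − 1 of the bundles agent j receives at the leaves of the subtree rooted at N are ranked strictly below the bundle agent j receives at N's backward-induction outcome; in particular A_{j,1} = ∏_{i ≤ p} k_{j,i}. -/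
/-!
Backward induction over the rounds. If agent `j` is not active at round `t`, the node's outcome
is that of the chosen child, whose leaves are leaves of the node. If she is, she has `k_{j,i}`
children. The chosen child has at least `A_{j,t+1} - 1` leaves worse than the outcome. Every
other child has an outcome strictly worse than the node's outcome, so that leaf together with
the leaves below the child that are worse than it gives at least `A_{j,t+1}` leaves worse than
the node's outcome. In total this is `k_{j,i} A_{j,t+1} - 1 = A_{j,t} - 1`.
-/

open scoped Classical

/-- `Aval O j t`: the recursively defined quantity `A_{j,t}` (0-based rounds):
`A_{j, n*p} = 1` and, if round `t` is agent `j` picking from category `i`,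
`A_{j,t} = k_{j,i} * A_{j,t+1}`, unchanged for other agents. -/
def Aval {n p : ℕ} (O : Csam n p) (j : Fin n) (t : ℕ) : ℕ :=
  ∏ t' : Fin (n * p),
    if t ≤ (t' : ℕ) ∧ (O t').1 = j then kval O j (O t').2 else 1

theorem Finset.card_mul_le_card_add_one_of_fiberwise {α β : Type*} [DecidableEq β]
    {s : Finset α} {t : Finset β} {g : α → β} {m : ℕ} {b : β} (hb : b ∈ t)
    (hfib_b : m ≤ (s.filter fun a => g a = b).card + 1)
    (hfib : ∀ c ∈ t, c ≠ b → m ≤ (s.filter fun a => g a = c).card) :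
    t.card * m ≤ s.card + 1 :=
  calc t.card * m = ∑ _c ∈ t, m := by rw [Finset.sum_const, smul_eq_mul]
    _ ≤ ∑ c ∈ t, ((s.filter fun a => g a = c).card + if c = b then 1 else 0) :=
        Finset.sum_le_sum fun c hc => by
          split_ifs with hcb
          · exact hcb ▸ hfib_b
          · exact (hfib c hc hcb).trans le_self_add
    _ = (s.filter fun a => g a ∈ t).card + 1 := by
        rw [Finset.sum_add_distrib, Finset.sum_ite_eq', if_pos hb,
          Finset.sum_card_fiberwise_eq_card_filter]
    _ ≤ s.card + 1 := Nat.add_le_add_right (Finset.card_filter_le _ _) 1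

namespace Csam

variable {n p : ℕ} (O : Csam n p)

theorem Aval_zero (j : Fin n) : Aval O j 0 = ∏ i : Fin p, kval O j i := by
  simp only [Aval, zero_le, true_and]
  rw [Equiv.prod_comp O fun x => if x.1 = j then kval O j x.2 else 1, Fintype.prod_prod_type]
  simp [Finset.prod_ite_irrel]

theorem Aval_total (j : Fin n) : Aval O j (n * p) = 1 :=
  Finset.prod_eq_one fun t' _ => if_neg fun h => Nat.lt_irrefl _ (t'.isLt.trans_le h.1)

theorem Aval_succ (j : Fin n) {t : ℕ} (ht : t < n * p) :
    Aval O j t =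
      (if (O ⟨t, ht⟩).1 = j then kval O j (O ⟨t, ht⟩).2 else 1) * Aval O j (t + 1) := by
  have hterm : ∀ t' : Fin (n * p),
      (if t ≤ (t' : ℕ) ∧ (O t').1 = j then kval O j (O t').2 else 1) =
        (if t' = ⟨t, ht⟩ then (if (O t').1 = j then kval O j (O t').2 else 1) else 1) *
          (if t + 1 ≤ (t' : ℕ) ∧ (O t').1 = j then kval O j (O t').2 else 1) := by
    intro t'
    simp only [Fin.ext_iff]
    split_ifs <;> simp_all <;> omega
  rw [Aval, Aval, Finset.prod_congr rfl fun t' _ => hterm t', Finset.prod_mul_distrib,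
    Finset.prod_ite_eq']
  simp

def LegalUpTo (t : ℕ) (h : Fin (n * p) → Fin n) : Prop :=
  ∀ t' : Fin (n * p), (t' : ℕ) < t → availH O h t' (O t').2 (h t')

noncomputable def subtreeLeaves (t : ℕ) (h : Fin (n * p) → Fin n) :
    Finset (Fin (n * p) → Fin n) :=
  Finset.univ.filter fun h' => (∀ t' : Fin (n * p), (t' : ℕ) < t → h' t' = h t') ∧
    ∀ t' : Fin (n * p), t ≤ (t' : ℕ) → availH O h' t' (O t').2 (h' t')

variable {O}

theorem availH_congr {h₁ h₂ : Fin (n * p) → Fin n} {t : ℕ}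
    (hh : ∀ t' : Fin (n * p), (t' : ℕ) < t → h₁ t' = h₂ t') {i : Fin p} {d : Fin n} :
    availH O h₁ t i d ↔ availH O h₂ t i d :=
  forall_congr' fun t' => imp_congr_right fun ht' => by rw [hh t' ht']

theorem availH_iff {h : Fin (n * p) → Fin n} {t : ℕ} {i : Fin p} {d : Fin n} :
    availH O h t i d ↔ ∀ j : Fin n, (O.symm (j, i) : ℕ) < t → h (O.symm (j, i)) ≠ d := by
  refine ⟨fun H j hj => H _ hj (by simp), fun H t' ht' hi => ?_⟩
  have hpos : O.symm ((O t').1, i) = t' := by rw [← hi, Prod.mk.eta, Equiv.symm_apply_apply]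
  have := H (O t').1
  rw [hpos] at this
  exact this ht'

/-- By legality the agents who picked from category `i` before `j` took pairwise distinct
items; the remaining `n` agents are `j` herself and those picking after her. -/
theorem card_availH_eq_kval {h : Fin (n * p) → Fin n} (j : Fin n) (i : Fin p)
    (hh : LegalUpTo O (O.symm (j, i)) h) :
    (Finset.univ.filter (availH O h (O.symm (j, i)) i)).card = kval O j i := by
  set e : Fin n → Fin (n * p) := fun j' => O.symm (j', i)
  set before := Finset.univ.filter fun j' => e j' < e j
  have he : e.Injective := fun a b hab => congrArg Prod.fst (O.symm.injective hab)
  have havail : Finset.univ.filter (availH O h (e j) i) =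
      Finset.univ \ before.image (h ∘ e) := by
    ext d
    simp [before, availH_iff, e]
  have hinj : Set.InjOn (h ∘ e) before := by
    intro a ha b hb hab
    simp only [before, Finset.coe_filter, Finset.mem_univ, true_and, Set.mem_ofPred_eq] at ha hb
    by_contra hne
    have hlegal : ∀ c, e c < e j → availH O h (e c) i (h (e c)) := fun c hc => by
      simpa [e] using hh (e c) hc
    rcases (he.ne hne).lt_or_gt with hlt | hlt
    · exact availH_iff.mp (hlegal b hb) a hlt hab
    · exact availH_iff.mp (hlegal a ha) b hlt hab.symm
  have hafter : Finset.univ.filter (fun j' => ¬ e j' < e j) =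
      insert j (Finset.univ.filter fun j' => e j < e j') := by
    ext j'
    simp only [Finset.mem_filter, Finset.mem_univ, true_and, Finset.mem_insert, not_lt,
      le_iff_eq_or_lt, he.eq_iff]
    tauto
  have hsplit : before.card + (1 + (Finset.univ.filter fun j' => e j < e j').card) = n := by
    have hj : j ∉ Finset.univ.filter fun j' => e j < e j' := by simp
    rw [add_comm 1, ← Finset.card_insert_of_notMem hj, ← hafter,
      Finset.card_filter_add_card_filter_not, Finset.card_univ, Fintype.card_fin]
  rw [havail, Finset.card_sdiff_of_subset (Finset.subset_univ _), Finset.card_univ,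
    Fintype.card_fin, Finset.card_image_of_injOn hinj]
  change _ = 1 + (Finset.univ.filter fun j' => e j < e j').card
  omega

theorem LegalUpTo.update {t : ℕ} (ht : t < n * p) {h : Fin (n * p) → Fin n}
    (hh : LegalUpTo O t h) {d : Fin n} (hd : availH O h t (O ⟨t, ht⟩).2 d) :
    LegalUpTo O (t + 1) (Function.update h ⟨t, ht⟩ d) := by
  have hlow : ∀ t' : Fin (n * p), (t' : ℕ) < t → Function.update h ⟨t, ht⟩ d t' = h t' :=
    fun t' ht' => Function.update_of_ne (Fin.ne_of_lt ht') _ _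
  intro t' ht'
  rcases (Nat.lt_succ_iff.1 ht').lt_or_eq with hlt | heq
  · rw [hlow t' hlt, availH_congr fun t'' ht'' => hlow t'' (ht''.trans hlt)]
    exact hh t' hlt
  · obtain rfl : t' = ⟨t, ht⟩ := Fin.ext heq
    rw [Function.update_self, availH_congr hlow]
    exact hd

theorem mem_subtreeLeaves_update {t : ℕ} (ht : t < n * p) {h : Fin (n * p) → Fin n} {d : Fin n}
    (hd : availH O h t (O ⟨t, ht⟩).2 d) {h' : Fin (n * p) → Fin n} :
    h' ∈ subtreeLeaves O (t + 1) (Function.update h ⟨t, ht⟩ d) ↔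
      h' ∈ subtreeLeaves O t h ∧ h' ⟨t, ht⟩ = d := by
  simp only [subtreeLeaves, Finset.mem_filter, Finset.mem_univ, true_and]
  constructor
  · rintro ⟨hagree, hlegal⟩
    have hlow : ∀ t' : Fin (n * p), (t' : ℕ) < t → h' t' = h t' := fun t' ht' =>
      (hagree t' (by omega)).trans (Function.update_of_ne (Fin.ne_of_lt ht') _ _)
    have hpick : h' ⟨t, ht⟩ = d := by simpa using hagree ⟨t, ht⟩ (by simp)
    refine ⟨⟨hlow, fun t' ht' => ?_⟩, hpick⟩
    rcases ht'.eq_or_lt with heq | hlt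
    · obtain rfl : t' = ⟨t, ht⟩ := Fin.ext heq.symm
      rw [hpick, availH_congr hlow]
      exact hd
    · exact hlegal t' hlt
  · rintro ⟨⟨hlow, hlegal⟩, rfl⟩
    refine ⟨fun t' ht' => ?_, fun t' ht' => hlegal t' (by omega)⟩
    rcases (Nat.lt_succ_iff.1 ht').lt_or_eq with hlt | heq
    · rw [Function.update_of_ne (Fin.ne_of_lt hlt)]
      exact hlow t' hlt
    · obtain rfl : t' = ⟨t, ht⟩ := Fin.ext heq
      simp

theorem filter_subtreeLeaves_apply_eq {t : ℕ} (ht : t < n * p) {h : Fin (n * p) → Fin n}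
    {d : Fin n} (hd : availH O h t (O ⟨t, ht⟩).2 d) :
    (subtreeLeaves O t h).filter (fun h' => h' ⟨t, ht⟩ = d) =
      subtreeLeaves O (t + 1) (Function.update h ⟨t, ht⟩ d) := by
  ext h'
  rw [Finset.mem_filter, mem_subtreeLeaves_update ht hd]

end Csam

namespace BIOutcome

open Csam

variable {n p : ℕ} {O : Csam n p} {P : Profile n p}
  {F : ℕ → (Fin (n * p) → Fin n) → Fin n → Bundle n p}

theorem exists_mem_subtreeLeaves (hF : BIOutcome O P F) {t : ℕ} (ht : t ≤ n * p)
    {h : Fin (n * p) → Fin n} (hh : LegalUpTo O t h) :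
    ∃ h' ∈ subtreeLeaves O t h, F (n * p) h' = F t h := by
  induction ht using Nat.decreasingInduction generalizing h with
  | self => exact ⟨h, by simp [subtreeLeaves], rfl⟩
  | of_succ t ht ih =>
    obtain ⟨d, hd, hFd, -⟩ := hF.2 t ht h
    obtain ⟨h', hmem, hFh'⟩ := ih (hh.update ht hd)
    exact ⟨h', ((mem_subtreeLeaves_update ht hd).1 hmem).1, hFh'.trans hFd.symm⟩

theorem apply_apply_of_lt (hF : BIOutcome O P F) {t : ℕ} (ht : t ≤ n * p)
    {h : Fin (n * p) → Fin n} (hh : LegalUpTo O t h) {j : Fin n} {i : Fin p}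
    (hji : (O.symm (j, i) : ℕ) < t) : F t h j i = h (O.symm (j, i)) := by
  obtain ⟨h', hmem, hFh'⟩ := hF.exists_mem_subtreeLeaves ht hh
  rw [← hFh', hF.1]
  exact (Finset.mem_filter.1 hmem).2.1 _ hji

/-- Distinct picks lead to distinct bundles for the active agent, so the weak preference
in `BIOutcome` is strict. -/
theorem exists_pick_strictly_preferred (hF : BIOutcome O P F) {t : ℕ} (ht : t < n * p)
    {h : Fin (n * p) → Fin n} (hh : LegalUpTo O t h) :
    ∃ d, availH O h t (O ⟨t, ht⟩).2 d ∧
      F t h = F (t + 1) (Function.update h ⟨t, ht⟩ d) ∧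
      ∀ d', availH O h t (O ⟨t, ht⟩).2 d' → d' ≠ d →
        P (O ⟨t, ht⟩).1 (F t h (O ⟨t, ht⟩).1)
          (F (t + 1) (Function.update h ⟨t, ht⟩ d') (O ⟨t, ht⟩).1) := by
  obtain ⟨d, hd, hFd, hbest⟩ := hF.2 t ht h
  have hpick : ∀ d', availH O h t (O ⟨t, ht⟩).2 d' →
      F (t + 1) (Function.update h ⟨t, ht⟩ d') (O ⟨t, ht⟩).1 (O ⟨t, ht⟩).2 = d' := by
    intro d' hd'
    rw [hF.apply_apply_of_lt ht (hh.update ht hd') (by simp)]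
    simp
  refine ⟨d, hd, hFd, fun d' hd' hne => ?_⟩
  rcases hbest d' hd' hne with heq | hlt
  · exact absurd (hpick d' hd' ▸ hpick d hd ▸ congrFun heq (O ⟨t, ht⟩).2).symm hne
  · rwa [hFd]

theorem card_filter_add_one_le (hF : BIOutcome O P F) {j : Fin n}
    [IsStrictOrder (Bundle n p) (P j)] {t : ℕ} (ht : t ≤ n * p) {h : Fin (n * p) → Fin n}
    (hh : LegalUpTo O t h) {b : Bundle n p} (hb : P j b (F t h j)) :
    ((subtreeLeaves O t h).filter fun h' => P j (F t h j) (F (n * p) h' j)).card + 1 ≤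
      ((subtreeLeaves O t h).filter fun h' => P j b (F (n * p) h' j)).card := by
  obtain ⟨leaf, hleaf, hFleaf⟩ := hF.exists_mem_subtreeLeaves ht hh
  have hnotMem :
      leaf ∉ (subtreeLeaves O t h).filter fun h' => P j (F t h j) (F (n * p) h' j) := by
    simp [hFleaf, irrefl]
  rw [← Finset.card_insert_of_notMem hnotMem]
  refine Finset.card_le_card (Finset.insert_subset ?_ fun h' hh' => ?_)
  · exact Finset.mem_filter.2 ⟨hleaf, hFleaf ▸ hb⟩
  · rw [Finset.mem_filter] at hh' ⊢
    exact ⟨hh'.1, _root_.trans hb hh'.2⟩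

theorem Aval_le_card_filter_add_one (hF : BIOutcome O P F) (j : Fin n)
    [IsStrictOrder (Bundle n p) (P j)] {t : ℕ} (ht : t ≤ n * p) {h : Fin (n * p) → Fin n}
    (hh : LegalUpTo O t h) :
    Aval O j t ≤
      ((subtreeLeaves O t h).filter fun h' => P j (F t h j) (F (n * p) h' j)).card + 1 := by
  induction ht using Nat.decreasingInduction generalizing h with
  | self => simp [Aval_total]
  | of_succ t ht ih =>
    obtain ⟨d, hd, hFd, hbetter⟩ := hF.exists_pick_strictly_preferred ht hh
    by_cases hj : (O ⟨t, ht⟩).1 = j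
    · rw [hj] at hbetter
      have hD : (Finset.univ.filter (availH O h t (O ⟨t, ht⟩).2)).card =
          kval O j (O ⟨t, ht⟩).2 := by
        have hh' : LegalUpTo O (O.symm ((O ⟨t, ht⟩).1, (O ⟨t, ht⟩).2)) h := by
          simpa using hh
        simpa [← hj] using card_availH_eq_kval _ _ hh'
      rw [Aval_succ O j ht, if_pos hj, ← hD]
      refine Finset.card_mul_le_card_add_one_of_fiberwise (g := fun h' => h' ⟨t, ht⟩)
        (by simpa using hd) ?_ fun d' hd' hne => ?_
      · rw [Finset.filter_comm, filter_subtreeLeaves_apply_eq ht hd, hFd]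
        exact ih (hh.update ht hd)
      · rw [Finset.mem_filter] at hd'
        rw [Finset.filter_comm, filter_subtreeLeaves_apply_eq ht hd'.2]
        exact (ih (hh.update ht hd'.2)).trans
          (hF.card_filter_add_one_le ht (hh.update ht hd'.2) (hbetter d' hd'.2 hne))
    · calc Aval O j t = Aval O j (t + 1) := by rw [Aval_succ O j ht, if_neg hj, one_mul]
        _ ≤ _ := ih (hh.update ht hd)
        _ ≤ _ := by
            rw [hFd]
            refine Nat.add_le_add_right (Finset.card_le_card
              (Finset.filter_subset_filter _ fun h' hh' => ?_)) 1
            exact ((mem_subtreeLeaves_update ht hd).1 hh').1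

end BIOutcome

theorem statement19_general (n p : ℕ) (O : Csam n p)
    (P : Profile n p) (hP : ValidProfile P)
    (F : ℕ → (Fin (n * p) → Fin n) → Fin n → Bundle n p)
    (hF : BIOutcome O P F) :
    (∀ j : Fin n, Aval O j 0 = ∏ i : Fin p, kval O j i) ∧
    (∀ t : ℕ, t ≤ n * p → ∀ h : Fin (n * p) → Fin n,
      (∀ t' : Fin (n * p), (t' : ℕ) < t → availH O h t' (O t').2 (h t')) →
      ∀ j : Fin n,
        Aval O j t - 1 ≤
          (Finset.univ.filter (fun h' : Fin (n * p) → Fin n =>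
            (∀ t' : Fin (n * p), (t' : ℕ) < t → h' t' = h t') ∧
            (∀ t' : Fin (n * p), t ≤ (t' : ℕ) → availH O h' t' (O t').2 (h' t')) ∧
            P j (F t h j) (F (n * p) h' j))).card) := by
  refine ⟨Csam.Aval_zero O, fun t ht h hh j => ?_⟩
  have := (hP j).toIsStrictOrder
  have hbound := hF.Aval_le_card_filter_add_one j ht hh
  rw [Csam.subtreeLeaves, Finset.filter_filter] at hbound
  simpa only [Nat.sub_le_iff_le_add, and_assoc] using hbound

theorem statement19 (n p : ℕ) (hn : 0 < n) (hp : 0 < p) (O : Csam n p)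
    (P : Profile n p) (hP : ValidProfile P)
    (F : ℕ → (Fin (n * p) → Fin n) → Fin n → Bundle n p)
    (hF : BIOutcome O P F) :
    (∀ j : Fin n, Aval O j 0 = ∏ i : Fin p, kval O j i) ∧
    (∀ t : ℕ, t ≤ n * p → ∀ h : Fin (n * p) → Fin n,
      (∀ t' : Fin (n * p), (t' : ℕ) < t → availH O h t' (O t').2 (h t')) →
      ∀ j : Fin n,
        Aval O j t - 1 ≤
          (Finset.univ.filter (fun h' : Fin (n * p) → Fin n =>
            (∀ t' : Fin (n * p), (t' : ℕ) < t → h' t' = h t') ∧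
            (∀ t' : Fin (n * p), t ≤ (t' : ℕ) → availH O h' t' (O t').2 (h' t')) ∧
            P j (F t h j) (F (n * p) h' j))).card) :=
  statement19_general n p O P hP F hF
end
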